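/- arXiv:1210.5683 — 3 statements merged into one kernel-verified Lean document; each statement's English description precedes it below -/
import Mathlib

section
/- Let G be a graph with a set function H : V(G) → 2^ℕ with H(v) ⊆ {0, 1, ..., d_G(v)}. If G admits an orientation in which every vertex v has in-degree d⁻(v) ≥ |{0, 1, ..., d_G(v)} \ H(v)|, then G has an H-factor. -/
/-!
Induction on the graph. If `d_G(v) ∈ H(v)` for every `v`, then `G` itself is an `H`-factor.
Otherwise pick `v` with `d_G(v) ∉ H(v)`; then `d_G(v)` is a missing value below the degree,
so `v` has in-degree at least one, say along the arc `u → v`. Delete the edge `uv` together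
with its arc: at `v` both the in-degree and the number of missing values `≤ d(v)` drop by one
(the value `d_G(v)` itself is no longer counted), at `u` the in-degree is unchanged while the
degree only decreases, and elsewhere nothing changes. The hypothesis survives, and an
`H`-factor of the smaller graph is one of `G`.
-/

noncomputable def ndeg {V : Type*} (F : SimpleGraph V) (v : V) : ℕ :=
  (F.neighborSet v).ncard

open SimpleGraph

section

variable {V : Type*}

structure IsOrientation (G : SimpleGraph V) (D : V → V → Prop) : Prop where
  adj_iff : ∀ x y, G.Adj x y ↔ D x y ∨ D y x
  asymm : ∀ x y, D x y → ¬ D y x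

lemma ncard_Iic_diff_lt_of_notMem {H : Set ℕ} {m n : ℕ} (hmn : m < n) (hn : n ∉ H) :
    (Set.Iic m \ H).ncard < (Set.Iic n \ H).ncard :=
  Set.ncard_lt_ncard (Set.ssubset_iff_subset_ne.2
    ⟨Set.sdiff_subset_sdiff_left (Set.Iic_subset_Iic.2 hmn.le),
      fun h => (h ▸ ⟨Set.self_mem_Iic, hn⟩ : n ∈ Set.Iic m \ H).1.not_gt hmn⟩)
    ((Set.finite_Iic n).subset Set.sdiff_subset)

section Finite

variable [Finite V] {G G' : SimpleGraph V} {u v : V}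

lemma ndeg_mono (h : G' ≤ G) (v : V) : ndeg G' v ≤ ndeg G v :=
  Set.ncard_le_ncard (neighborSet_mono h v)

lemma ndeg_deleteEdges_lt (h : G.Adj u v) : ndeg (G.deleteEdges {s(u, v)}) v < ndeg G v :=
  Set.ncard_lt_ncard (Set.ssubset_iff_subset_ne.2
    ⟨neighborSet_mono (deleteEdges_le _) v, fun heq => by
      have hu : u ∈ (G.deleteEdges {s(u, v)}).neighborSet v := heq ▸ h.symm
      simp [Sym2.eq_swap] at hu⟩)

lemma deleteEdges_lt_of_adj (h : G.Adj u v) : G.deleteEdges {s(u, v)} < G :=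
  (deleteEdges_le _).lt_of_ne fun heq => (ndeg_deleteEdges_lt h).ne (by rw [heq])

end Finite

namespace IsOrientation

variable {G : SimpleGraph V} {D : V → V → Prop} {u v : V}

lemma deleteArc (hD : IsOrientation G D) (huv : D u v) :
    IsOrientation (G.deleteEdges {s(u, v)}) (fun x y => D x y ∧ ¬(x = u ∧ y = v)) where
  adj_iff x y := by
    have := hD.asymm u v huv
    simp only [deleteEdges_adj, hD.adj_iff, Set.mem_singleton_iff, Sym2.eq_iff]
    grind
  asymm x y h h' := hD.asymm x y h.1 h'.1

variable [Finite V] {H : V → Set ℕ}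

lemma ncard_Iic_diff_le_deleteArc (hD : IsOrientation G D) (huv : D u v) (hv : ndeg G v ∉ H v)
    (hin : ∀ w, (Set.Iic (ndeg G w) \ H w).ncard ≤ {x | D x w}.ncard) (w : V) :
    (Set.Iic (ndeg (G.deleteEdges {s(u, v)}) w) \ H w).ncard
      ≤ {x | D x w ∧ ¬(x = u ∧ w = v)}.ncard := by
  obtain rfl | hw := eq_or_ne w v
  · have hdrop : {x | D x w ∧ ¬(x = u ∧ w = w)}.ncard + 1 = {x | D x w}.ncard := by
      convert Set.ncard_sdiff_singleton_add_one (s := {x | D x w}) huv using 3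
      ext x
      simp
    have := ncard_Iic_diff_lt_of_notMem
      (ndeg_deleteEdges_lt ((hD.adj_iff u w).2 (Or.inl huv))) hv
    linarith [hin w]
  · calc (Set.Iic (ndeg (G.deleteEdges {s(u, v)}) w) \ H w).ncard
        ≤ (Set.Iic (ndeg G w) \ H w).ncard :=
          Set.ncard_le_ncard (Set.sdiff_subset_sdiff_left
            (Set.Iic_subset_Iic.2 (ndeg_mono (deleteEdges_le _) w)))
            ((Set.finite_Iic _).subset Set.sdiff_subset)
      _ ≤ {x | D x w}.ncard := hin w
      _ = {x | D x w ∧ ¬(x = u ∧ w = v)}.ncard := by simp [hw]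

end IsOrientation

theorem exists_factor_of_isOrientation [Finite V] (H : V → Set ℕ) (G : SimpleGraph V)
    (D : V → V → Prop) (hD : IsOrientation G D)
    (hin : ∀ v, (Set.Iic (ndeg G v) \ H v).ncard ≤ {u | D u v}.ncard) :
    ∃ F ≤ G, ∀ v, ndeg F v ∈ H v := by
  induction G using WellFoundedLT.induction generalizing D with
  | _ G ih =>
  by_cases hG : ∀ v, ndeg G v ∈ H v
  · exact ⟨G, le_rfl, hG⟩
  obtain ⟨v, hv⟩ := not_forall.1 hG
  obtain ⟨u, huv⟩ : {u | D u v}.Nonempty := by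
    refine Set.nonempty_of_ncard_ne_zero (Nat.pos_iff_ne_zero.1 (lt_of_lt_of_le ?_ (hin v)))
    exact (Set.ncard_pos ((Set.finite_Iic _).subset Set.sdiff_subset)).2 ⟨_, Set.self_mem_Iic, hv⟩
  obtain ⟨F, hF, hFH⟩ := ih _ (deleteEdges_lt_of_adj ((hD.adj_iff u v).2 (Or.inl huv))) _
    (hD.deleteArc huv) (hD.ncard_Iic_diff_le_deleteArc huv hv hin)
  exact ⟨F, hF.trans (deleteEdges_le _), hFH⟩

end

theorem frank_lau_szabo_general {V : Type*} [Fintype V] (G : SimpleGraph V)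
    (H : V → Set ℕ)
    (D : V → V → Prop)
    (hor : ∀ x y, G.Adj x y ↔ (D x y ∨ D y x))
    (hasym : ∀ x y, D x y → ¬ D y x)
    (hin : ∀ v, (Set.Iic (ndeg G v) \ H v).ncard ≤ {u | D u v}.ncard) :
    ∃ F ≤ G, ∀ v, ndeg F v ∈ H v :=
  exists_factor_of_isOrientation H G D ⟨hor, hasym⟩ hin

/-- **Frank–Lau–Szabó.** If `H(v) ⊆ {0, 1, …, d_G(v)}` and `G` has an
orientation `D` in which every vertex `v` has in-degree at least
`|{0, 1, …, d_G(v)} \ H(v)|`, then `G` has an `H`-factor. -/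
theorem frank_lau_szabo {V : Type*} [Fintype V] (G : SimpleGraph V)
    (H : V → Set ℕ) (hH : ∀ v, H v ⊆ Set.Iic (ndeg G v))
    (D : V → V → Prop)
    (hor : ∀ x y, G.Adj x y ↔ (D x y ∨ D y x))
    (hasym : ∀ x y, D x y → ¬ D y x)
    (hin : ∀ v, (Set.Iic (ndeg G v) \ H v).ncard ≤ {u | D u v}.ncard) :
    ∃ F ≤ G, ∀ v, ndeg F v ∈ H v :=
  frank_lau_szabo_general G H D hor hasym hin
end

section
/- For any even integer r ≥ 6, there exists a connected r-regular simple graph G* of even order such that G* has no H*-factor, where H* is the set of odd positive integers at most r, excluding r/2 - 1, r/2, and r/2 + 1. In particular, G* has no {k, r-k}-factor for any odd k with 1 ≤ k ≤ r/2 - 2. -/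
/-!
Write `r = 2m`. A gadget is a complete multipartite graph with one edge `st` removed, its ports
`s` and `t` having degree one less than the others; we use `K_{2m+1} - st` (odd order) and
`K_{2,…,2} - st` with `m + 1` parts (even order), both `2m`-regular off the ports. Joining a new
vertex `z` to both ports of `a` copies of the first and `b` copies of the second gadget, with
`a + b = m`, `b ≤ 1` and `a` odd, gives a connected `r`-regular graph of even order
`a (r + 1) + b (r + 2) + 1`.

If every degree of a spanning subgraph `F` is odd, the handshake lemma inside a gadget of odd order
forces `F` to use an odd number, hence exactly one, of its two edges to `z`. So
`a ≤ d_F(z) ≤ a + 2b`, which puts `d_F(z)` in `{m - 1, m, m + 1}`; this rules out every degree set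
of odd numbers avoiding that window, such as `H*` and `{k, r - k}` for `k ≤ m - 2`.
-/

open Finset Function

section Counting

variable {α β X Y : Type*}

theorem Set.ncard_eq_sum_ite [Fintype α] (s : Set α) [DecidablePred (· ∈ s)] :
    s.ncard = ∑ x, if x ∈ s then 1 else 0 := by
  rw [Set.ncard_eq_toFinset_card', ← card_filter]
  congr 1
  ext x
  simp

theorem Set.ncard_sum_prod [Fintype α] [Fintype β] [Fintype X] [Fintype Y]
    (P : α × X ⊕ β × Y → Prop) :
    {v | P v}.ncard = ∑ i, {x | P (.inl (i, x))}.ncard + ∑ j, {y | P (.inr (j, y))}.ncard := by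
  classical
  simp only [Set.ncard_eq_sum_ite, Fintype.sum_sum_type, Fintype.sum_prod_type]
  rfl

end Counting

namespace SimpleGraph

variable {V W α β X : Type*}

theorem ndeg_eq_degree (G : SimpleGraph V) (v : V) [Fintype (G.neighborSet v)] :
    ndeg G v = G.degree v := by
  rw [ndeg, ← card_neighborSet_eq_degree, Set.ncard_eq_toFinset_card', Set.toFinset_card]

theorem Iso.ndeg_eq {G : SimpleGraph V} {G' : SimpleGraph W} (f : G ≃g G') (v : V) :
    ndeg G' (f v) = ndeg G v := by
  rw [ndeg, ndeg, ← Nat.card_coe_set_eq, ← Nat.card_coe_set_eq,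
    Nat.card_congr (f.mapNeighborSet v)]

theorem ndeg_sdiff_add_ndeg [Finite V] {G H : SimpleGraph V} (h : H ≤ G) (v : V) :
    ndeg (G \ H) v + ndeg H v = ndeg G v :=
  Set.ncard_sdiff_add_ncard_of_subset fun _ hw ↦ h hw

theorem ndeg_edge [DecidableEq V] {s t : V} (hst : s ≠ t) (v : V) :
    ndeg (edge s t) v = if v = s ∨ v = t then 1 else 0 := by
  by_cases hs : v = s
  · subst hs
    have : (edge v t).neighborSet v = {t} := by ext w; simp [edge_adj]; grind
    simp [ndeg, this]
  by_cases ht : v = t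
  · subst ht
    have : (edge s v).neighborSet v = {s} := by ext w; simp [edge_adj]; grind
    simp [ndeg, this]
  · have : (edge s t).neighborSet v = ∅ := by ext w; simp [edge_adj]; grind
    simp [ndeg, this, hs, ht]

theorem ndeg_sum_inl (G : SimpleGraph α) (H : SimpleGraph β) (v : α) :
    ndeg (G ⊕g H) (.inl v) = ndeg G v := by
  rw [ndeg, neighborSet_sum_inl, Set.ncard_image_of_injective _ Sum.inl_injective, ndeg]

theorem ndeg_sum_inr (G : SimpleGraph α) (H : SimpleGraph β) (w : β) :
    ndeg (G ⊕g H) (.inr w) = ndeg H w := by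
  rw [ndeg, neighborSet_sum_inr, Set.ncard_image_of_injective _ Sum.inr_injective, ndeg]

theorem ndeg_bot_boxProd (G : SimpleGraph X) (i : α) (x : X) :
    ndeg ((⊥ : SimpleGraph α) □ G) (i, x) = ndeg G x := by
  have : ((⊥ : SimpleGraph α) □ G).neighborSet (i, x) = Prod.mk i '' G.neighborSet x := by
    ext ⟨j, y⟩; simp [boxProd_adj, eq_comm]
  rw [ndeg, this, Set.ncard_image_of_injective _ (Prod.mk_right_injective i), ndeg]

theorem ndeg_none_eq (F : SimpleGraph (Option V)) :
    ndeg F none = {v | F.Adj none (some v)}.ncard := by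
  have : F.neighborSet none = some '' {v | F.Adj none (some v)} := by
    ext (_ | v) <;> simp
  rw [ndeg, this, Set.ncard_image_of_injective _ (Option.some_injective V)]

def apex (H : SimpleGraph V) (P : Set V) : SimpleGraph (Option V) where
  Adj
    | none, none => False
    | none, some v => v ∈ P
    | some v, none => v ∈ P
    | some u, some v => H.Adj u v
  symm := ⟨by rintro (_ | u) (_ | v) h <;> first | exact h | exact h.symm⟩
  loopless := ⟨by rintro (_ | u) h; exacts [h, H.loopless.irrefl u h]⟩

section apex

variable {H : SimpleGraph V} {P : Set V}

@[simp] theorem apex_adj_some_none {v : V} : (H.apex P).Adj (some v) none ↔ v ∈ P := .rfl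
@[simp] theorem apex_adj_some_some {u v : V} : (H.apex P).Adj (some u) (some v) ↔ H.Adj u v :=
  .rfl

theorem ndeg_apex_none : ndeg (H.apex P) none = P.ncard := by
  rw [ndeg_none_eq]
  rfl

theorem ndeg_apex_some [Finite V] (v : V) [Decidable (v ∈ P)] :
    ndeg (H.apex P) (some v) = ndeg H v + if v ∈ P then 1 else 0 := by
  by_cases hv : v ∈ P
  · have : (H.apex P).neighborSet (some v) = insert none (some '' H.neighborSet v) := by
      ext (_ | w) <;> simp [hv]
    rw [ndeg, this, Set.ncard_insert_of_notMem (by simp),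
      Set.ncard_image_of_injective _ (Option.some_injective V), if_pos hv, ndeg]
  · have : (H.apex P).neighborSet (some v) = some '' H.neighborSet v := by
      ext (_ | w) <;> simp [hv]
    rw [ndeg, this, Set.ncard_image_of_injective _ (Option.some_injective V), if_neg hv, ndeg,
      add_zero]

theorem apex_connected (h : ∀ v, ∃ p ∈ P, H.Reachable p v) : (H.apex P).Connected := by
  refine (connected_iff_exists_forall_reachable _).mpr ⟨none, ?_⟩
  rintro (_ | v)
  · rfl
  · obtain ⟨p, hp, hpv⟩ := h v
    exact (show (H.apex P).Adj none (some p) from hp).reachable.trans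
      (hpv.map (⟨some, id⟩ : H →g H.apex P))

theorem odd_ncard_adj_apex [Finite V] {ι : Type*} [Fintype ι] {F : SimpleGraph (Option V)}
    (hF : F ≤ H.apex P) (hodd : ∀ w, Odd (ndeg F w)) {f : ι → V} (hf : Injective f)
    (hclosed : ∀ i v, H.Adj (f i) v → v ∈ Set.range f) (hι : Odd (Fintype.card ι)) :
    Odd {i | F.Adj none (some (f i))}.ncard := by
  classical
  have := Fintype.ofFinite V
  set F' := F.comap (some ∘ f)
  have hsplit : ∀ i, ndeg F (some (f i)) =
      F'.degree i + if F.Adj none (some (f i)) then 1 else 0 := by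
    intro i
    rw [ndeg, Set.ncard_eq_sum_ite, Fintype.sum_option, ← card_neighborFinset_eq_degree,
      neighborFinset_eq_filter, card_filter, add_comm]
    congr 1
    · refine (Fintype.sum_of_injective f hf _ _ (fun v hv ↦ if_neg fun hadj ↦ ?_)
        fun j ↦ rfl).symm
      exact hv (hclosed i v (hF hadj))
    · exact if_congr (F.adj_comm _ _) rfl rfl
  have hsum : Odd (∑ i, ndeg F (some (f i))) := by
    rw [odd_sum_iff_odd_card_odd]
    simpa [hodd] using hι
  have heven : Even (∑ i, F'.degree i) := by
    rw [sum_degrees_eq_twice_card_edges]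
    exact even_two_mul _
  rw [Set.ncard_eq_sum_ite]
  simp only [hsplit, sum_add_distrib] at hsum
  exact (Nat.odd_add'.mp hsum).mpr heven

end apex

end SimpleGraph

namespace GStar

open SimpleGraph

def gadget (p q : ℕ) : SimpleGraph (Fin (p + 1) × Fin (q + 1)) :=
  completeEquipartiteGraph (p + 1) (q + 1) \ edge (0, 0) (1, 0)

def ports (p q : ℕ) : Set (Fin (p + 1) × Fin (q + 1)) := {(0, 0), (1, 0)}

section gadget

variable {p q : ℕ}

theorem port_zero_ne_port_one (hp : 1 ≤ p) : ((0, 0) : Fin (p + 1) × Fin (q + 1)) ≠ (1, 0) := by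
  simp [Prod.ext_iff, Fin.ext_iff, Nat.mod_eq_of_lt (by omega : 1 < p + 1)]

theorem ncard_ports (hp : 1 ≤ p) : (ports p q).ncard = 2 :=
  Set.ncard_pair (port_zero_ne_port_one hp)

theorem ndeg_gadget_add (hp : 1 ≤ p) (v : Fin (p + 1) × Fin (q + 1)) [Decidable (v ∈ ports p q)] :
    ndeg (gadget p q) v + (if v ∈ ports p q then 1 else 0) = p * (q + 1) := by
  have hne := port_zero_ne_port_one (q := q) hp
  have hle : edge ((0, 0) : Fin (p + 1) × Fin (q + 1)) (1, 0) ≤ completeEquipartiteGraph _ _ :=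
    (edge_le_iff _).mpr (.inr (by simpa [Prod.ext_iff] using hne))
  have hports : ndeg (edge ((0, 0) : Fin (p + 1) × Fin (q + 1)) (1, 0)) v =
      if v ∈ ports p q then 1 else 0 := by
    classical
    rw [ndeg_edge hne]
    simp [ports]
  rw [gadget, ← hports, ndeg_sdiff_add_ndeg hle, ndeg_eq_degree, degree_completeEquipartiteGraph,
    Nat.add_sub_cancel]

theorem gadget_adj {v w : Fin (p + 1) × Fin (q + 1)} :
    (gadget p q).Adj v w ↔ v.1 ≠ w.1 ∧ ¬(v = (0, 0) ∧ w = (1, 0) ∨ v = (1, 0) ∧ w = (0, 0)) := by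
  simp only [gadget, sdiff_adj, completeEquipartiteGraph_adj, edge_adj]
  grind

theorem gadget_connected (hp : 2 ≤ p) : (gadget p q).Connected := by
  have h1 : 1 % (p + 1) = 1 := Nat.mod_eq_of_lt (by omega)
  let c : Fin (p + 1) := ⟨2, by omega⟩
  have hc : ∀ v : Fin (p + 1) × Fin (q + 1), v.1 ≠ c → (gadget p q).Adj (c, 0) v := by
    intro v hv
    refine gadget_adj.mpr ⟨hv.symm, ?_⟩
    rintro (⟨h, -⟩ | ⟨h, -⟩) <;> simp [c, Prod.ext_iff, Fin.ext_iff, h1] at h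
  refine (connected_iff_exists_forall_reachable _).mpr ⟨(c, 0), fun v ↦ ?_⟩
  by_cases hv : v.1 = c
  · have h0 : (gadget p q).Adj (0, 0) v := by
      refine gadget_adj.mpr ⟨by simp [hv, c, Fin.ext_iff], ?_⟩
      rintro (⟨-, h⟩ | ⟨h, -⟩)
      · simp [h, c, Fin.ext_iff, h1] at hv
      · simp [Prod.ext_iff, Fin.ext_iff, h1] at h
    exact (hc (0, 0) (by simp [c, Fin.ext_iff])).reachable.trans h0.reachable
  · exact (hc v hv).reachable

end gadget

abbrev Vertex (m a b : ℕ) :=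
  Fin a × (Fin (2 * m + 1) × Fin 1) ⊕ Fin b × (Fin (m + 1) × Fin 2)

def gadgetUnion (m a b : ℕ) : SimpleGraph (Vertex m a b) :=
  ((⊥ : SimpleGraph (Fin a)) □ gadget (2 * m) 0) ⊕g ((⊥ : SimpleGraph (Fin b)) □ gadget m 1)

def gadgetUnionPorts (m a b : ℕ) : Set (Vertex m a b) :=
  {v | Sum.elim (fun x ↦ x.2 ∈ ports (2 * m) 0) (fun y ↦ y.2 ∈ ports m 1) v}

-- `G*`, with `z = none`.
def graph (m a b : ℕ) : SimpleGraph (Option (Vertex m a b)) :=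
  (gadgetUnion m a b).apex (gadgetUnionPorts m a b)

variable {m a b : ℕ}

theorem card_option_vertex :
    Fintype.card (Option (Vertex m a b)) = a * (2 * m + 1) + b * (2 * (m + 1)) + 1 := by
  simp [mul_comm]

theorem ndeg_graph (hm : 1 ≤ m) (hab : a + b = m) (w : Option (Vertex m a b)) :
    ndeg (graph m a b) w = 2 * m := by
  classical
  rcases w with _ | (⟨i, x⟩ | ⟨i, y⟩)
  · rw [graph, ndeg_apex_none, gadgetUnionPorts, Set.ncard_sum_prod]
    simp [ncard_ports (by omega : 1 ≤ 2 * m), ncard_ports hm]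
    omega
  · rw [graph, ndeg_apex_some, gadgetUnion, ndeg_sum_inl, ndeg_bot_boxProd]
    exact (ndeg_gadget_add (by omega) x).trans (by ring)
  · rw [graph, ndeg_apex_some, gadgetUnion, ndeg_sum_inr, ndeg_bot_boxProd]
    exact (ndeg_gadget_add hm y).trans (by ring)

theorem graph_connected (hm : 2 ≤ m) : (graph m a b).Connected := by
  refine apex_connected fun v ↦ ?_
  rcases v with ⟨i, x⟩ | ⟨i, y⟩
  · refine ⟨.inl (i, (0, 0)), by simp [gadgetUnionPorts, ports], ?_⟩
    exact ((gadget_connected (by omega)).preconnected (0, 0) x).map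
      (Embedding.sumInl.toHom.comp (boxProdRight _ _ i).toHom)
  · refine ⟨.inr (i, (0, 0)), by simp [gadgetUnionPorts, ports], ?_⟩
    exact ((gadget_connected hm).preconnected (0, 0) y).map
      (Embedding.sumInr.toHom.comp (boxProdRight _ _ i).toHom)

theorem ndeg_none_bounds_of_odd (hm : 1 ≤ m) {F : SimpleGraph (Option (Vertex m a b))}
    (hF : F ≤ graph m a b) (hodd : ∀ w, Odd (ndeg F w)) :
    a ≤ ndeg F none ∧ ndeg F none ≤ a + 2 * b := by
  have hA : ∀ i, {x | F.Adj none (some (.inl (i, x)))}.ncard = 1 := by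
    intro i
    have hle : {x | F.Adj none (some (.inl (i, x)))}.ncard ≤ 2 :=
      (Set.ncard_le_ncard fun x hx ↦ hF hx).trans_eq (ncard_ports (by omega))
    have hclosed : ∀ x v, (gadgetUnion m a b).Adj (.inl (i, x)) v →
        v ∈ Set.range fun x ↦ .inl (i, x) := by
      rintro x (⟨j, y⟩ | ⟨j, y⟩) h
      · simp only [gadgetUnion, sum_adj_inl, boxProd_adj, bot_adj, false_and, false_or] at h
        exact ⟨y, by rw [h.2]⟩
      · simp [gadgetUnion] at h
    obtain ⟨k, hk⟩ := odd_ncard_adj_apex hF hodd (fun _ _ h ↦ by simpa using h) hclosed (by simp)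
    omega
  have hB : ∑ i, {y | F.Adj none (some (.inr (i, y)))}.ncard ≤ 2 * b :=
    (sum_le_sum fun i _ ↦ (Set.ncard_le_ncard fun x hx ↦ hF hx).trans_eq (ncard_ports hm)).trans_eq
      (by simp [mul_comm])
  rw [ndeg_none_eq, Set.ncard_sum_prod]
  simp only [hA, sum_const, card_univ, Fintype.card_fin, smul_eq_mul, mul_one]
  omega

end GStar

open SimpleGraph in
theorem exists_regular_graph_odd_subgraph_degree_near_half {m : ℕ} (hm : 2 ≤ m) :
    ∃ (n : ℕ) (G : SimpleGraph (Fin n)), Even n ∧ G.Connected ∧ (∀ v, ndeg G v = 2 * m) ∧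
      ∀ F ≤ G, (∀ v, Odd (ndeg F v)) → ∃ v, m ≤ ndeg F v + 1 ∧ ndeg F v ≤ m + 1 := by
  obtain ⟨a, b, ⟨k, rfl⟩, hab, hb⟩ : ∃ a b, Odd a ∧ a + b = m ∧ b ≤ 1 := by
    rcases Nat.even_or_odd m with hm' | hm'
    · exact ⟨m - 1, 1, Nat.Even.sub_odd (by omega) hm' odd_one, by omega, le_rfl⟩
    · exact ⟨m, 0, hm', rfl, zero_le_one⟩
  let e := Fintype.equivFin (Option (GStar.Vertex m (2 * k + 1) b))
  refine ⟨_, (GStar.graph m _ b).comap e.symm, ?_,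
    (Iso.comap _ _).connected_iff.mpr (GStar.graph_connected hm),
    fun v ↦ ((Iso.comap _ _).ndeg_eq v).symm.trans (GStar.ndeg_graph (by omega) hab _),
    fun F hF hodd ↦ ?_⟩
  · rw [GStar.card_option_vertex]
    exact ⟨k * (2 * m + 1) + m + b * (m + 1) + 1, by ring⟩
  · have hF' : F.comap e ≤ GStar.graph m _ b := fun u w h ↦ by simpa using hF h
    have hdeg (u) : ndeg (F.comap e) u = ndeg F (e u) := ((Iso.comap e F).ndeg_eq u).symm
    obtain ⟨h₁, h₂⟩ := GStar.ndeg_none_bounds_of_odd (by omega) hF' fun u ↦ hdeg u ▸ hodd (e u)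
    rw [hdeg] at h₁ h₂
    exact ⟨e none, by omega, by omega⟩

/-- For any even `r ≥ 6` there is a connected `r`-regular simple graph of even
order with no `H*`-factor, where
`H* = [r]_odd \ {r/2 - 1, r/2, r/2 + 1}`; in particular, it has no
`{k, r-k}`-factor for any odd `k` with `1 ≤ k ≤ r/2 - 2`. -/
theorem no_Hstar_factor {r : ℕ} (hr : Even r) (hr6 : 6 ≤ r) :
    ∃ (n : ℕ) (G : SimpleGraph (Fin n)),
      Even n ∧ G.Connected ∧ (∀ v, ndeg G v = r) ∧
      (¬ ∃ F ≤ G, ∀ v, ndeg F v ∈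
        {h : ℕ | Odd h ∧ 1 ≤ h ∧ h ≤ r ∧
          h ≠ r / 2 - 1 ∧ h ≠ r / 2 ∧ h ≠ r / 2 + 1}) ∧
      (∀ k : ℕ, Odd k → 1 ≤ k → k ≤ r / 2 - 2 →
        ¬ ∃ F ≤ G, ∀ v, ndeg F v = k ∨ ndeg F v = r - k) := by
  obtain ⟨m, rfl⟩ := hr
  obtain ⟨n, G, hn, hconn, hreg, hnear⟩ :=
    exists_regular_graph_odd_subgraph_degree_near_half (m := m) (by omega)
  refine ⟨n, G, hn, hconn, fun v ↦ (hreg v).trans (two_mul m), ?_, ?_⟩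
  · rintro ⟨F, hFG, hF⟩
    obtain ⟨v, hv₁, hv₂⟩ := hnear F hFG fun v ↦ (hF v).1
    obtain ⟨-, -, -, h₁, h₂, h₃⟩ := hF v
    omega
  · rintro k hk - hkm ⟨F, hFG, hF⟩
    have hodd (v) : Odd (ndeg F v) :=
      (hF v).elim (· ▸ hk) (· ▸ Nat.Even.sub_odd (by omega) ⟨m, rfl⟩ hk)
    obtain ⟨v, hv₁, hv₂⟩ := hnear F hFG hodd
    rcases hF v with h | h <;> omega
end

section
/- Let r be even, and let G* be the r-regular graph formed from r disjoint copies J_1, ..., J_r of K_{r+1} minus an edge (with removed edge endpoints a_i, b_i in copy J_i), plus two new vertices u, v, where u is joined to a_1, b_1, ..., a_{r/2-1}, b_{r/2-1}, a_{r-1}, a_r and v is joined to a_{r/2}, b_{r/2}, ..., a_{r-2}, b_{r-2}, b_{r-1}, b_r. Then in any spanning subgraph F of G* in which every vertex has odd degree, the degree of u in F lies in {r/2 - 1, r/2, r/2 + 1}. -/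
/-- In copy `i` (0-based), the vertices `a_i` and `b_i` are indexed by `0` and
`1` respectively.  `adjU r i a` says the vertex `a` of copy `i` is a neighbour
of `u`: `u` is joined to `a_i, b_i` for the copies `1, …, r/2 - 1` (1-based)
and to `a_{r-1}, a_r` (1-based). -/
def adjU (r : ℕ) (i : Fin r) (a : Fin (r + 1)) : Prop :=
  ((i : ℕ) < r / 2 - 1 ∧ ((a : ℕ) = 0 ∨ (a : ℕ) = 1)) ∨
    (((i : ℕ) = r - 2 ∨ (i : ℕ) = r - 1) ∧ (a : ℕ) = 0)

/-- `adjV r i a` says the vertex `a` of copy `i` is a neighbour of `v`: `v` is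
joined to `a_i, b_i` for the copies `r/2, …, r-2` (1-based) and to
`b_{r-1}, b_r` (1-based). -/
def adjV (r : ℕ) (i : Fin r) (a : Fin (r + 1)) : Prop :=
  (r / 2 - 1 ≤ (i : ℕ) ∧ (i : ℕ) ≤ r - 3 ∧ ((a : ℕ) = 0 ∨ (a : ℕ) = 1)) ∨
    (((i : ℕ) = r - 2 ∨ (i : ℕ) = r - 1) ∧ (a : ℕ) = 1)

/-- The adjacency relation of the graph `G*`: it consists of `r` disjoint
copies (indexed by `Fin r`) of `K_{r+1}` minus the edge `a_i b_i` (vertices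
`a_i = 0` and `b_i = 1` of each copy), together with two extra vertices
`u = Sum.inr 0` and `v = Sum.inr 1` joined to the copies as prescribed by
`adjU` and `adjV`. -/
def GstarAdj (r : ℕ) :
    ((Fin r × Fin (r + 1)) ⊕ Fin 2) → ((Fin r × Fin (r + 1)) ⊕ Fin 2) → Prop
  | Sum.inl (i, a), Sum.inl (j, b) =>
      i = j ∧ a ≠ b ∧ ¬(((a : ℕ) = 0 ∧ (b : ℕ) = 1) ∨ ((a : ℕ) = 1 ∧ (b : ℕ) = 0))
  | Sum.inl (i, a), Sum.inr w => if w = 0 then adjU r i a else adjV r i a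
  | Sum.inr w, Sum.inl (i, a) => if w = 0 then adjU r i a else adjV r i a
  | Sum.inr _, Sum.inr _ => False

/-- The graph `G*` of the paper. -/
def Gstar (r : ℕ) : SimpleGraph ((Fin r × Fin (r + 1)) ⊕ Fin 2) where
  Adj := GstarAdj r
  symm := by
    constructor
    rintro (⟨i, a⟩ | w) (⟨j, b⟩ | w') h <;> simp only [GstarAdj] at * <;> tauto
  loopless := by
    constructor
    rintro (⟨i, a⟩ | w) h
    · simp only [GstarAdj] at h; tauto
    · simp only [GstarAdj] at h

/-!
Each copy `J_i` has the odd number `r + 1` of vertices, all of odd degree in `F`, and the edges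
of `F` inside `J_i` contribute an even amount to their degree sum; so an odd number of `F`-edges
leave `J_i`. For the copies `J_1, …, J_{r/2-1}` the only `G*`-edges leaving `J_i` are the two
edges to `u`, so exactly one of them lies in `F`. The remaining neighbours of `u` are
`a_{r-1}, a_r`, hence `r/2 - 1 ≤ deg_F u ≤ r/2 + 1`.
-/

open Finset

namespace SimpleGraph

variable {V : Type*} [Fintype V] [DecidableEq V] (G : SimpleGraph V) [DecidableRel G.Adj]

theorem even_sum_card_neighborFinset_inter (S : Finset V) :
    Even (∑ x ∈ S, #(G.neighborFinset x ∩ S)) := by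
  rw [← ZMod.natCast_eq_zero_iff_even]
  have hcount : ∀ x, #(G.neighborFinset x ∩ S) = #{y ∈ S | G.Adj x y} := fun x => by
    congr 1; ext y; simp [and_comm]
  simp only [hcount, Nat.cast_sum, natCast_card_filter, ← sum_product']
  refine sum_involution (fun p _ => p.swap) (fun p _ => ?_) (fun p _ hp => ?_)
    (fun p hp => by simpa [and_comm] using hp) (fun _ _ => rfl)
  · simp only [Prod.fst_swap, Prod.snd_swap, G.adj_comm p.2 p.1]
    split_ifs <;> decide
  · have hadj : G.Adj p.1 p.2 := by by_contra h; simp [h] at hp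
    exact fun h => hadj.ne (congrArg Prod.snd h)

theorem odd_card_neighborFinset_inter_of_boundary_subsingleton {S : Finset V} {u : V}
    (hS : Odd #S) (hodd : ∀ x ∈ S, Odd (G.degree x)) (hu : u ∉ S)
    (hbdry : ∀ x ∈ S, ∀ y ∉ S, G.Adj x y → y = u) :
    Odd #(G.neighborFinset u ∩ S) := by
  have hout : ∀ x ∈ S, #(G.neighborFinset x \ S) = if G.Adj x u then 1 else 0 := by
    intro x hx
    have : G.neighborFinset x \ S = ({u} : Finset V).filter (G.Adj x) := by
      ext y
      simp only [mem_sdiff, mem_neighborFinset, mem_filter, mem_singleton]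
      exact ⟨fun h => ⟨hbdry x hx y h.2 h.1, h.1⟩, by rintro ⟨rfl, h⟩; exact ⟨h, hu⟩⟩
    rw [this, filter_singleton]
    split_ifs <;> rfl
  have hsplit : ∑ x ∈ S, G.degree x =
      ∑ x ∈ S, #(G.neighborFinset x ∩ S) + #(G.neighborFinset u ∩ S) := by
    rw [← sum_congr rfl fun x _ => (card_inter_add_card_sdiff (G.neighborFinset x) S).trans
      (G.card_neighborFinset_eq_degree x), sum_add_distrib, sum_congr rfl hout, sum_boole,
      Nat.cast_id]
    congr 2
    ext x
    simp [G.adj_comm x u, and_comm]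
  have hsum : Odd (∑ x ∈ S, G.degree x) := by
    rwa [odd_sum_iff_odd_card_odd, filter_true_of_mem hodd]
  rw [hsplit] at hsum
  exact (Nat.odd_add'.1 hsum).2 (G.even_sum_card_neighborFinset_inter S)

end SimpleGraph

lemma ndeg_eq_degree {V : Type*} [Fintype V] (G : SimpleGraph V) [DecidableRel G.Adj] (v : V) :
    ndeg G v = G.degree v := by
  rw [ndeg, Set.ncard_eq_toFinset_card', ← SimpleGraph.card_neighborFinset_eq_degree]
  rfl

theorem Fin.card_filter_le_val (n m : ℕ) : #{i : Fin n | m ≤ (i : ℕ)} = n - m := by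
  have := card_filter_add_card_filter_not (s := univ) fun i : Fin n => (i : ℕ) < m
  simp only [not_lt, Fin.card_filter_val_lt, card_univ, Fintype.card_fin] at this
  omega

namespace Gstar

variable {r : ℕ}

def copy (r : ℕ) (i : Fin r) : Finset ((Fin r × Fin (r + 1)) ⊕ Fin 2) :=
  univ.map ((Function.Embedding.sectR i (Fin (r + 1))).trans Function.Embedding.inl)

lemma mem_copy {i : Fin r} {x : (Fin r × Fin (r + 1)) ⊕ Fin 2} :
    x ∈ copy r i ↔ ∃ a, Sum.inl (i, a) = x := by
  simp [copy]

lemma card_copy (i : Fin r) : #(copy r i) = r + 1 := by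
  simp [copy]

lemma pairwiseDisjoint_copy (s : Finset (Fin r)) :
    (s : Set (Fin r)).PairwiseDisjoint (copy r) := by
  intro i _ j _ hij
  simp only [Function.onFun, disjoint_left, mem_copy]
  rintro _ ⟨a, rfl⟩ ⟨b, h⟩
  exact hij (Prod.ext_iff.1 (Sum.inl_injective h)).1.symm

lemma adj_inl_inl {i j : Fin r} {a b : Fin (r + 1)}
    (h : (Gstar r).Adj (Sum.inl (i, a)) (Sum.inl (j, b))) : i = j :=
  h.1

lemma not_adj_inr_inr (w w' : Fin 2) : ¬ (Gstar r).Adj (Sum.inr w) (Sum.inr w') :=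
  id

lemma adj_inr_zero_iff {i : Fin r} {a : Fin (r + 1)} :
    (Gstar r).Adj (Sum.inr 0) (Sum.inl (i, a)) ↔ adjU r i a :=
  Iff.rfl

lemma adj_inr_one_iff {i : Fin r} {a : Fin (r + 1)} :
    (Gstar r).Adj (Sum.inr 1) (Sum.inl (i, a)) ↔ adjV r i a :=
  Iff.rfl

lemma adj_eq_inr_zero_of_mem_copy {i : Fin r} (hi : (i : ℕ) < r / 2 - 1)
    {x y : (Fin r × Fin (r + 1)) ⊕ Fin 2} (hx : x ∈ copy r i) (hy : y ∉ copy r i)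
    (h : (Gstar r).Adj x y) : y = Sum.inr 0 := by
  obtain ⟨a, rfl⟩ := mem_copy.1 hx
  rcases y with ⟨j, b⟩ | w
  · exact absurd (mem_copy.2 ⟨b, by rw [adj_inl_inl h]⟩) hy
  · fin_cases w
    · rfl
    · have : adjV r i a := adj_inr_one_iff.1 h.symm
      unfold adjV at this
      omega

variable {F : SimpleGraph ((Fin r × Fin (r + 1)) ⊕ Fin 2)} [DecidableRel F.Adj]

lemma card_neighborFinset_inter_copy_le_two (hF : F ≤ Gstar r) (i : Fin r) :
    #(F.neighborFinset (Sum.inr 0) ∩ copy r i) ≤ 2 := by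
  have hsub : F.neighborFinset (Sum.inr 0) ∩ copy r i ⊆
      ({a : Fin (r + 1) | (a : ℕ) < 2} : Finset _).image fun a => Sum.inl (i, a) := by
    intro x hx
    rw [mem_inter, SimpleGraph.mem_neighborFinset] at hx
    obtain ⟨a, rfl⟩ := mem_copy.1 hx.2
    have : adjU r i a := adj_inr_zero_iff.1 (hF hx.1)
    unfold adjU at this
    exact mem_image.2 ⟨a, by simp only [mem_filter, mem_univ, true_and]; omega, rfl⟩
  calc _ ≤ _ := card_le_card hsub
    _ ≤ _ := card_image_le
    _ ≤ 2 := by rw [Fin.card_filter_val_lt]; exact min_le_right _ _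

lemma card_neighborFinset_inter_copy_eq_one (hr : Even r) (hF : F ≤ Gstar r)
    (hodd : ∀ w, Odd (F.degree w)) {i : Fin r} (hi : (i : ℕ) < r / 2 - 1) :
    #(F.neighborFinset (Sum.inr 0) ∩ copy r i) = 1 := by
  have hpar := F.odd_card_neighborFinset_inter_of_boundary_subsingleton
    (by rw [card_copy]; exact hr.add_one) (fun x _ => hodd x) (by simp [mem_copy])
    (fun x hx y hy h => adj_eq_inr_zero_of_mem_copy hi hx hy (hF h))
  obtain ⟨k, hk⟩ := hpar
  have := card_neighborFinset_inter_copy_le_two hF i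
  omega

def lowerCopies (r : ℕ) : Finset ((Fin r × Fin (r + 1)) ⊕ Fin 2) :=
  ({i : Fin r | (i : ℕ) < r / 2 - 1} : Finset _).biUnion (copy r)

lemma card_neighborFinset_inter_lowerCopies (hr : Even r) (hF : F ≤ Gstar r)
    (hodd : ∀ w, Odd (F.degree w)) :
    #(F.neighborFinset (Sum.inr 0) ∩ lowerCopies r) = r / 2 - 1 := by
  rw [lowerCopies, inter_biUnion,
    card_biUnion ((pairwiseDisjoint_copy _).mono fun _ => inter_subset_right),
    sum_congr rfl fun i hi =>
      card_neighborFinset_inter_copy_eq_one hr hF hodd (mem_filter.1 hi).2,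
    sum_const, smul_eq_mul, mul_one, Fin.card_filter_val_lt]
  omega

-- `r - (r - 2) = min r 2`, which is `0` in the degenerate case `r = 0`.
lemma card_neighborFinset_sdiff_lowerCopies_le (hF : F ≤ Gstar r) :
    #(F.neighborFinset (Sum.inr 0) \ lowerCopies r) ≤ r - (r - 2) := by
  have hsub : F.neighborFinset (Sum.inr 0) \ lowerCopies r ⊆
      ({i : Fin r | r - 2 ≤ (i : ℕ)} : Finset _).image fun i => Sum.inl (i, 0) := by
    intro x hx
    rw [mem_sdiff, SimpleGraph.mem_neighborFinset] at hx
    obtain ⟨hadj, hlow⟩ := hx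
    rcases x with ⟨i, a⟩ | w
    · have : adjU r i a := adj_inr_zero_iff.1 (hF hadj)
      unfold adjU at this
      rcases this with ⟨hi, -⟩ | ⟨hi, ha⟩
      · exact absurd (mem_biUnion.2 ⟨i, by simpa using hi, mem_copy.2 ⟨a, rfl⟩⟩) hlow
      · refine mem_image.2 ⟨i, by simp only [mem_filter, mem_univ, true_and]; omega, ?_⟩
        rw [show a = 0 from Fin.ext ha]
    · exact absurd (hF hadj) (not_adj_inr_inr 0 w)
  calc _ ≤ _ := card_le_card hsub
    _ ≤ _ := card_image_le
    _ = r - (r - 2) := Fin.card_filter_le_val r (r - 2)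

end Gstar

/-- In any spanning subgraph `F` of `G*` in which every vertex has odd degree,
the degree of `u = Sum.inr 0` in `F` lies in `{r/2 - 1, r/2, r/2 + 1}`. -/
theorem Gstar_odd_subgraph_degree_u {r : ℕ} (hr : Even r)
    (F : SimpleGraph ((Fin r × Fin (r + 1)) ⊕ Fin 2)) (hF : F ≤ Gstar r)
    (hodd : ∀ w, Odd (ndeg F w)) :
    ndeg F (Sum.inr 0) ∈ ({r / 2 - 1, r / 2, r / 2 + 1} : Set ℕ) := by
  classical
  have hodd' : ∀ w, Odd (F.degree w) := fun w => ndeg_eq_degree F w ▸ hodd w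
  have hlower := Gstar.card_neighborFinset_inter_lowerCopies hr hF hodd'
  have hrest := Gstar.card_neighborFinset_sdiff_lowerCopies_le hF
  rw [ndeg_eq_degree, ← F.card_neighborFinset_eq_degree,
    ← card_inter_add_card_sdiff _ (Gstar.lowerCopies r)]
  obtain ⟨m, rfl⟩ := hr
  simp only [Set.mem_insert_iff, Set.mem_singleton_iff]
  omega
end
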